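/- arXiv:1102.2316 — 2 statements merged into one kernel-verified Lean document; each statement's English description precedes it below -/
import Mathlib

section
/- For every matrix A in SL₂(ℝ) there exist real numbers θ₁, θ₂ and a real number r ≥ 1 such that A = e(θ₁) · D(r) · e(θ₂), where D(r) is the diagonal matrix with diagonal entries r and r⁻¹. (Cartan decomposition of SL₂(ℝ).) -/
/-!
Identify a real `2 × 2` matrix `M = !![a, b; c, d]` with the pair of complex numbers
`z = (a + d) + (b - c) i` and `w = (a - d) - (b + c) i`. Expanding `e(θ₁) · diag(r, s) · e(θ₂)`
shows that it corresponds to `z = (r + s) exp(i (θ₁ + θ₂))` and `w = (r - s) exp(i (θ₁ - θ₂))`,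
so writing `z` and `w` in polar form decomposes every real `2 × 2` matrix with `|s| ≤ r`.
For `M ∈ SL₂(ℝ)` the determinant forces `r s = 1`, hence `s = r⁻¹` and `r ≥ 1`.
-/

open Real Matrix

/-- The rotation matrix `e(θ)` with rows `(cos θ, sin θ)` and `(-sin θ, cos θ)`. -/
noncomputable def rotMat (θ : ℝ) : Matrix (Fin 2) (Fin 2) ℝ :=
  !![Real.cos θ, Real.sin θ; -Real.sin θ, Real.cos θ]

lemma det_rotMat (θ : ℝ) : (rotMat θ).det = 1 := by
  simp [rotMat, Matrix.det_fin_two, ← sq, Real.cos_sq_add_sin_sq]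

lemma rotMat_mul_diag_mul_rotMat (θ₁ θ₂ r s : ℝ) :
    rotMat θ₁ * !![r, 0; 0, s] * rotMat θ₂ =
      !![((r + s) * cos (θ₁ + θ₂) + (r - s) * cos (θ₁ - θ₂)) / 2,
          ((r + s) * sin (θ₁ + θ₂) - (r - s) * sin (θ₁ - θ₂)) / 2;
        (-(r + s) * sin (θ₁ + θ₂) - (r - s) * sin (θ₁ - θ₂)) / 2,
          ((r + s) * cos (θ₁ + θ₂) - (r - s) * cos (θ₁ - θ₂)) / 2] := by
  simp only [rotMat, Matrix.cons_mul, Matrix.vecMul_cons, Matrix.empty_mul, cos_add, cos_sub,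
    sin_add, sin_sub]
  ext i j
  fin_cases i <;> fin_cases j <;> simp <;> ring

lemma exists_eq_rotMat_mul_diag_mul_rotMat (M : Matrix (Fin 2) (Fin 2) ℝ) :
    ∃ θ₁ θ₂ r s : ℝ, |s| ≤ r ∧ M = rotMat θ₁ * !![r, 0; 0, s] * rotMat θ₂ := by
  set z : ℂ := ⟨M 0 0 + M 1 1, M 0 1 - M 1 0⟩
  set w : ℂ := ⟨M 0 0 - M 1 1, -(M 0 1 + M 1 0)⟩
  refine ⟨(z.arg + w.arg) / 2, (z.arg - w.arg) / 2, (‖z‖ + ‖w‖) / 2, (‖z‖ - ‖w‖) / 2,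
    abs_le.mpr ⟨by linarith [norm_nonneg z], by linarith [norm_nonneg w]⟩, ?_⟩
  rw [rotMat_mul_diag_mul_rotMat, Matrix.eta_fin_two M]
  have hz_re : ‖z‖ * cos z.arg = M 0 0 + M 1 1 := Complex.norm_mul_cos_arg z
  have hz_im : ‖z‖ * sin z.arg = M 0 1 - M 1 0 := Complex.norm_mul_sin_arg z
  have hw_re : ‖w‖ * cos w.arg = M 0 0 - M 1 1 := Complex.norm_mul_cos_arg w
  have hw_im : ‖w‖ * sin w.arg = -(M 0 1 + M 1 0) := Complex.norm_mul_sin_arg w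
  have hsum : (z.arg + w.arg) / 2 + (z.arg - w.arg) / 2 = z.arg := by ring
  have hdiff : (z.arg + w.arg) / 2 - (z.arg - w.arg) / 2 = w.arg := by ring
  rw [hsum, hdiff]
  ext i j
  fin_cases i <;> fin_cases j <;> simp
  · linear_combination -hz_re / 2 - hw_re / 2
  · linear_combination hw_im / 2 - hz_im / 2
  · linear_combination hz_im / 2 + hw_im / 2
  · linear_combination hw_re / 2 - hz_re / 2

lemma one_le_of_abs_le_of_mul_eq_one {r s : ℝ} (hsr : |s| ≤ r) (hrs : r * s = 1) : 1 ≤ r := by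
  have hr : 0 ≤ r := (abs_nonneg s).trans hsr
  nlinarith [mul_le_mul_of_nonneg_left ((le_abs_self s).trans hsr) hr]

/-- **Cartan decomposition of SL₂(ℝ)**: every `A ∈ SL₂(ℝ)` can be written as
`A = e(θ₁) · D(r) · e(θ₂)` with `r ≥ 1`, where `D(r) = diag(r, r⁻¹)`. -/
theorem sl2_cartan_decomposition (A : Matrix.SpecialLinearGroup (Fin 2) ℝ) :
    ∃ (θ₁ θ₂ r : ℝ), 1 ≤ r ∧
      (A : Matrix (Fin 2) (Fin 2) ℝ) = rotMat θ₁ * !![r, 0; 0, r⁻¹] * rotMat θ₂ := by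
  obtain ⟨θ₁, θ₂, r, s, hsr, hA⟩ :=
    exists_eq_rotMat_mul_diag_mul_rotMat (A : Matrix (Fin 2) (Fin 2) ℝ)
  have hrs : r * s = 1 := by
    have hdet := A.det_coe
    rwa [hA, det_mul, det_mul, det_rotMat, det_rotMat, det_fin_two_of, one_mul, mul_one,
      mul_zero, sub_zero] at hdet
  refine ⟨θ₁, θ₂, r, one_le_of_abs_le_of_mul_eq_one hsr hrs, ?_⟩
  rwa [inv_eq_of_mul_eq_one_right hrs]
end

section
/- The set of elliptic elements of GL₂(ℚ_p) is open: for a prime p, the set of all g ∈ GL₂(ℚ_p) whose characteristic polynomial is irreducible as a polynomial over ℚ_p is an open subset of GL₂(ℚ_p). -/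
open Matrix Polynomial Filter Topology

/-- Near any nonzero point, squaring maps neighborhoods onto neighborhoods. -/
lemma sq_map_nhds {p : ℕ} [Fact p.Prime] {y : ℚ_[p]} (hy : y ≠ 0) :
    Filter.map (fun x : ℚ_[p] => x * x) (𝓝 y) = 𝓝 (y * y) := by
  have h : HasStrictDerivAt (fun x : ℚ_[p] => x * x) (1 * y + y * 1) y :=
    (hasStrictDerivAt_id y).mul (hasStrictDerivAt_id y)
  exact h.map_nhds_eq (by simpa using fun h2 : y + y = 0 => hy (by linear_combination h2 / 2))

/-- The set of non-squares in `ℚ_p` is open. -/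
lemma isOpen_nonsquare (p : ℕ) [Fact p.Prime] :
    IsOpen {x : ℚ_[p] | ¬ IsSquare x} := by
  rw [isOpen_iff_mem_nhds]
  intro x hx
  have hx0 : x ≠ 0 := fun h => hx (h ▸ ⟨0, by simp⟩)
  have hmap : Filter.map (fun t : ℚ_[p] => x * (t * t)) (𝓝 1) = 𝓝 x := by
    have : (fun t : ℚ_[p] => x * (t * t)) = (fun u => x * u) ∘ (fun t => t * t) := rfl
    have h2 : Filter.map (fun u : ℚ_[p] => x * u) (𝓝 1) = 𝓝 x := by
      simpa using (Homeomorph.mulLeft₀ x hx0).map_nhds_eq 1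
    rw [this, ← Filter.map_map, sq_map_nhds one_ne_zero, one_mul, h2]
  rw [← hmap, Filter.mem_map]
  filter_upwards [isOpen_ne.mem_nhds (one_ne_zero : (1 : ℚ_[p]) ≠ 0)] with t ht
  rintro ⟨s, hs⟩
  exact hx ⟨s * t⁻¹, by field_simp at hs ⊢; linear_combination hs⟩

/-- The set of elliptic elements of `GL₂(ℚ_p)` — those whose characteristic polynomial is
irreducible over `ℚ_p` — is open. -/
theorem isOpen_elliptic_set (p : ℕ) [Fact p.Prime] :
    IsOpen {g : GL (Fin 2) ℚ_[p] |
      Irreducible ((g : Matrix (Fin 2) (Fin 2) ℚ_[p]).charpoly)} := by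
  have key : {g : GL (Fin 2) ℚ_[p] |
      Irreducible ((g : Matrix (Fin 2) (Fin 2) ℚ_[p]).charpoly)} =
      (fun g : GL (Fin 2) ℚ_[p] =>
        ((g : Matrix (Fin 2) (Fin 2) ℚ_[p]).trace) ^ 2 -
          4 * (g : Matrix (Fin 2) (Fin 2) ℚ_[p]).det) ⁻¹' {x | ¬ IsSquare x} := by
    ext g
    set M : Matrix (Fin 2) (Fin 2) ℚ_[p] := (g : Matrix (Fin 2) (Fin 2) ℚ_[p]) with hM
    have hdeg : M.charpoly.natDegree = 2 := by
      rw [charpoly_natDegree_eq_dim]; simp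
    have hc0 : M.charpoly.coeff 0 = M.det := by
      have := M.det_eq_sign_charpoly_coeff
      simpa using this.symm
    have hc1 : M.charpoly.coeff 1 = - M.trace := by
      have := M.trace_eq_neg_charpoly_coeff
      simp only [Fintype.card_fin] at this
      norm_num at this
      linear_combination this
    simp only [Set.mem_setOf_eq, Set.mem_preimage]
    rw [show (g : Matrix (Fin 2) (Fin 2) ℚ_[p]) = M from hM.symm]
    rw [← not_iff_not, not_not,
      M.charpoly_monic.not_irreducible_iff_exists_add_mul_eq_coeff hdeg]
    constructor
    · rintro ⟨c₁, c₂, h0, h1⟩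
      rw [hc0] at h0
      rw [hc1] at h1
      exact ⟨c₁ - c₂, by linear_combination -4 * h0 + (-M.trace + c₁ + c₂) * h1⟩
    · rintro ⟨s, hs⟩
      refine ⟨(-M.trace + s) / 2, (-M.trace - s) / 2, ?_, ?_⟩
      · rw [hc0]; field_simp; linear_combination -hs
      · rw [hc1]; ring
  rw [key]
  have hcont : Continuous (fun g : GL (Fin 2) ℚ_[p] =>
      ((g : Matrix (Fin 2) (Fin 2) ℚ_[p]).trace) ^ 2 -
        4 * (g : Matrix (Fin 2) (Fin 2) ℚ_[p]).det) := by
    have hval : Continuous (fun g : GL (Fin 2) ℚ_[p] =>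
        (g : Matrix (Fin 2) (Fin 2) ℚ_[p])) := Units.continuous_val
    exact ((hval.matrix_trace).pow 2).sub (continuous_const.mul hval.matrix_det)
  exact (isOpen_nonsquare p).preimage hcont
end
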